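/- arXiv:1108.1233 — 9 statements merged into one kernel-verified Lean document; each statement's English description precedes it below -/
import Mathlib

section
/- In the two-user selfish routing game on the load-balancing network, the symmetric profile (x₁*, x₂*) = (r/2 + ζ, r/2 + ζ), where ζ = cδ/(2L), is a Nash equilibrium: x₁* minimizes J₁(·, x₂*) over [0, r] and x₂* minimizes J₂(x₁*, ·) over [0, r]. -/
/-- Elbow latency function with parameters `r, L, δ`. -/
noncomputable def T (r L δ x : ℝ) : ℝ := max 0 (L / δ * (x - r) + L)

/-- Cost of user 1 in the two-user load-balancing game. -/
noncomputable def J₁ (r L δ c x₁ x₂ : ℝ) : ℝ :=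
  x₁ * T r L δ (x₁ + (r - x₂)) + (r - x₁) * (c + T r L δ (x₂ + (r - x₁)))

/-- Cost of user 2 in the two-user load-balancing game. -/
noncomputable def J₂ (r L δ c x₁ x₂ : ℝ) : ℝ :=
  x₂ * T r L δ (x₂ + (r - x₁)) + (r - x₂) * (c + T r L δ (x₁ + (r - x₂)))

/-!
Replacing the elbow latency `T` by its linear branch `L + (L/δ)(f - r)` can only lower user 1's
cost, since both flows `x₁` and `r - x₁` are nonnegative. Against an opponent playing `y`, the
linearised cost is a quadratic in `x₁` which agrees with the true cost at `x₁ = y` (both links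
then carry exactly `r`). Since `ζ` is chosen so that `(L/δ)(2y - r) = c` at `y = r/2 + ζ`, this
quadratic is `J₁(y, y) + 2(L/δ)(x₁ - y)²`, so `y` is a best response to itself. User 2's problem
is user 1's with the roles swapped.
-/

lemma T_self {r L : ℝ} (δ : ℝ) (hL : 0 ≤ L) : T r L δ r = L := by
  simp [T, hL]

lemma J₁_diag {r L : ℝ} (δ c y : ℝ) (hL : 0 ≤ L) :
    J₁ r L δ c y y = y * L + (r - y) * (c + L) := by
  simp only [J₁, add_sub_cancel, T_self δ hL]

lemma J₂_eq_J₁_swap (r L δ c x₁ x₂ : ℝ) : J₂ r L δ c x₁ x₂ = J₁ r L δ c x₂ x₁ := rfl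

lemma linearised_J₁_le_J₁ {r x : ℝ} (L δ c y : ℝ) (hx : x ∈ Set.Icc 0 r) :
    x * (L + L / δ * (x - y)) + (r - x) * (c + L - L / δ * (x - y)) ≤ J₁ r L δ c x y := by
  have h₁ : L + L / δ * (x - y) ≤ T r L δ (x + (r - y)) :=
    le_of_eq_of_le (by ring) (le_max_right _ _)
  have h₂ : c + L - L / δ * (x - y) ≤ c + T r L δ (y + (r - x)) :=
    le_of_eq_of_le (by ring) (add_le_add_right (le_max_right _ _) c)
  exact add_le_add (mul_le_mul_of_nonneg_left h₁ hx.1)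
    (mul_le_mul_of_nonneg_left h₂ (sub_nonneg.2 hx.2))

lemma linearised_J₁_eq_diag_add_sq {r L δ c y : ℝ} (x : ℝ) (hfoc : L / δ * (2 * y - r) = c) :
    x * (L + L / δ * (x - y)) + (r - x) * (c + L - L / δ * (x - y)) =
      y * L + (r - y) * (c + L) + 2 * (L / δ) * (x - y) ^ 2 := by
  rw [← hfoc]; ring

lemma J₁_le_of_first_order {r L δ c y : ℝ} (hL : 0 ≤ L) (hδ : 0 ≤ δ)
    (hfoc : L / δ * (2 * y - r) = c) {x : ℝ} (hx : x ∈ Set.Icc 0 r) :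
    J₁ r L δ c y y ≤ J₁ r L δ c x y := by
  calc J₁ r L δ c y y = y * L + (r - y) * (c + L) := J₁_diag δ c y hL
    _ ≤ y * L + (r - y) * (c + L) + 2 * (L / δ) * (x - y) ^ 2 :=
        le_add_of_nonneg_right (by positivity)
    _ = _ := (linearised_J₁_eq_diag_add_sq x hfoc).symm
    _ ≤ J₁ r L δ c x y := linearised_J₁_le_J₁ L δ c y hx

lemma symmetric_profile_first_order {r L δ : ℝ} (c : ℝ) (hL : L ≠ 0) (hδ : δ ≠ 0) :
    L / δ * (2 * (r / 2 + c * δ / (2 * L)) - r) = c := by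
  field_simp; ring

lemma symmetric_profile_mem_Icc {r L δ c : ℝ} (hδ : 0 ≤ δ) (hL : 0 < L) (hc : 0 ≤ c)
    (hcδ : c * δ ≤ r * L) : r / 2 + c * δ / (2 * L) ∈ Set.Icc 0 r := by
  have hζ₀ : 0 ≤ c * δ / (2 * L) := by positivity
  have hζr : c * δ / (2 * L) ≤ r / 2 := by
    rw [div_le_iff₀ (by positivity)]; nlinarith
  constructor <;> linarith

theorem symmetric_profile_is_nash_equilibrium
    (r L δ c : ℝ) (hδ : 0 < δ) (hδL : δ < L) (hLc : L < c) (hcδ : c * δ < r * L)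
    (ζ : ℝ) (hζ : ζ = c * δ / (2 * L)) :
    (r / 2 + ζ) ∈ Set.Icc (0 : ℝ) r ∧
    (∀ x₁ ∈ Set.Icc (0 : ℝ) r,
      J₁ r L δ c (r / 2 + ζ) (r / 2 + ζ) ≤ J₁ r L δ c x₁ (r / 2 + ζ)) ∧
    (∀ x₂ ∈ Set.Icc (0 : ℝ) r,
      J₂ r L δ c (r / 2 + ζ) (r / 2 + ζ) ≤ J₂ r L δ c (r / 2 + ζ) x₂) := by
  have hL : 0 < L := hδ.trans hδL
  have hfoc := symmetric_profile_first_order (r := r) c hL.ne' hδ.ne'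
  subst hζ
  refine ⟨symmetric_profile_mem_Icc hδ.le hL (hL.trans hLc).le hcδ.le,
    fun x hx => J₁_le_of_first_order hL.le hδ.le hfoc hx, fun x hx => ?_⟩
  simpa only [J₂_eq_J₁_swap] using J₁_le_of_first_order hL.le hδ.le hfoc hx
end

section
/- In the two-user selfish routing game on the load-balancing network, the Nash equilibrium is unique: if (x₁*, x₂*) ∈ [0,r]² is a Nash equilibrium, then x₁* = x₂* = r/2 + ζ, where ζ = cδ/(2L). -/
set_option maxHeartbeats 1000000


lemma T_lin (r L δ x : ℝ) (hδ : 0 < δ) (hL : 0 ≤ L) (hx : r - δ ≤ x) :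
    T r L δ x = L / δ * (x - r) + L := by
  have hE : L / δ * δ = L := div_mul_cancel₀ L hδ.ne'
  have hE0 : (0:ℝ) ≤ L / δ := by positivity
  have h1 : -δ ≤ x - r := by linarith
  have h2 := mul_le_mul_of_nonneg_left h1 hE0
  unfold T
  apply max_eq_right
  nlinarith

lemma T_zero (r L δ x : ℝ) (hδ : 0 < δ) (hL : 0 ≤ L) (hx : x ≤ r - δ) :
    T r L δ x = 0 := by
  have hE : L / δ * δ = L := div_mul_cancel₀ L hδ.ne'
  have hE0 : (0:ℝ) ≤ L / δ := by positivity
  have h1 : x - r ≤ -δ := by linarith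
  have h2 := mul_le_mul_of_nonneg_left h1 hE0
  unfold T
  apply max_eq_left
  nlinarith

lemma quad_min_left (K B lo hi a : ℝ) (hK : 0 < K)
    (ha : a ∈ Set.Icc lo hi)
    (hmin : ∀ y ∈ Set.Icc lo hi, K * a ^ 2 + B * a ≤ K * y ^ 2 + B * y)
    (hlt : lo < a) : 2 * K * a + B ≤ 0 := by
  by_contra h
  push_neg at h
  set d := 2 * K * a + B with hd
  set t := min (a - lo) (d / (2 * K)) with ht
  have ht0 : 0 < t := lt_min (by linarith) (by positivity)
  have ht1 : t ≤ a - lo := min_le_left _ _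
  have ht2 : t ≤ d / (2 * K) := min_le_right _ _
  have ht2' : 2 * K * t ≤ d := by
    rw [le_div_iff₀ (by positivity)] at ht2; nlinarith
  have hy : a - t ∈ Set.Icc lo hi := ⟨by linarith, by linarith [ha.2]⟩
  have hm := hmin (a - t) hy
  nlinarith [mul_le_mul_of_nonneg_right ht2' ht0.le]

lemma quad_min_right (K B lo hi a : ℝ) (hK : 0 < K)
    (ha : a ∈ Set.Icc lo hi)
    (hmin : ∀ y ∈ Set.Icc lo hi, K * a ^ 2 + B * a ≤ K * y ^ 2 + B * y)
    (hlt : a < hi) : 0 ≤ 2 * K * a + B := by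
  by_contra h
  push_neg at h
  set d := 2 * K * a + B with hd
  set t := min (hi - a) (-d / (2 * K)) with ht
  have ht0 : 0 < t := lt_min (by linarith) (div_pos (by linarith) (by positivity))
  have ht1 : t ≤ hi - a := min_le_left _ _
  have ht2 : t ≤ -d / (2 * K) := min_le_right _ _
  have ht2' : 2 * K * t ≤ -d := by
    rw [le_div_iff₀ (by positivity)] at ht2; nlinarith
  have hy : a + t ∈ Set.Icc lo hi := ⟨by linarith [ha.1], by linarith⟩
  have hm := hmin (a + t) hy
  nlinarith [mul_le_mul_of_nonneg_right ht2' ht0.le]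

theorem nash_equilibrium_unique
    (r L δ c : ℝ) (hδ : 0 < δ) (hδL : δ < L) (hLc : L < c) (hcδ : c * δ < r * L)
    (ζ : ℝ) (hζ : ζ = c * δ / (2 * L))
    (x₁ x₂ : ℝ) (hx₁ : x₁ ∈ Set.Icc (0 : ℝ) r) (hx₂ : x₂ ∈ Set.Icc (0 : ℝ) r)
    (hNE₁ : ∀ y ∈ Set.Icc (0 : ℝ) r, J₁ r L δ c x₁ x₂ ≤ J₁ r L δ c y x₂)
    (hNE₂ : ∀ y ∈ Set.Icc (0 : ℝ) r, J₂ r L δ c x₁ x₂ ≤ J₂ r L δ c x₁ y) :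
    x₁ = r / 2 + ζ ∧ x₂ = r / 2 + ζ := by
  obtain ⟨ha0, har⟩ := hx₁
  obtain ⟨hb0, hbr⟩ := hx₂
  have hL : 0 < L := hδ.trans hδL
  have hc : 0 < c := hL.trans hLc
  have hr : 0 < r := by nlinarith
  set e := L / δ with he
  have hE : e * δ = L := div_mul_cancel₀ L hδ.ne'
  have hE0 : (0:ℝ) < e := by rw [he]; positivity
  -- Step 1: x₁ - x₂ ≤ δ
  have hs1 : x₁ - x₂ ≤ δ := by
    by_contra h
    push_neg at h
    have hy : x₁ - δ ∈ Set.Icc (0:ℝ) r := ⟨by linarith, by linarith⟩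
    have hne := hNE₂ (x₁ - δ) hy
    have t1 : T r L δ (x₂ + (r - x₁)) = 0 := T_zero _ _ _ _ hδ hL.le (by linarith)
    have t2 : T r L δ (x₁ + (r - x₂)) = e * (x₁ + (r - x₂) - r) + L :=
      T_lin _ _ _ _ hδ hL.le (by linarith)
    have t3 : T r L δ (x₁ - δ + (r - x₁)) = 0 := T_zero _ _ _ _ hδ hL.le (by linarith)
    have t4 : T r L δ (x₁ + (r - (x₁ - δ))) = e * (x₁ + (r - (x₁ - δ)) - r) + L :=
      T_lin _ _ _ _ hδ hL.le (by linarith)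
    simp only [J₂] at hne
    rw [t1, t2, t3, t4] at hne
    nlinarith [mul_nonneg (show (0:ℝ) ≤ r - x₁ by linarith)
        (show (0:ℝ) ≤ e * (x₁ - x₂) - e * δ by nlinarith),
      mul_pos (show (0:ℝ) < x₁ - x₂ - δ by linarith)
        (show (0:ℝ) < c + L + e * (x₁ - x₂) by nlinarith)]
  -- Step 2: x₂ - x₁ ≤ δ
  have hs2 : x₂ - x₁ ≤ δ := by
    by_contra h
    push_neg at h
    have hy : x₂ - δ ∈ Set.Icc (0:ℝ) r := ⟨by linarith, by linarith⟩
    have hne := hNE₁ (x₂ - δ) hy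
    have t1 : T r L δ (x₁ + (r - x₂)) = 0 := T_zero _ _ _ _ hδ hL.le (by linarith)
    have t2 : T r L δ (x₂ + (r - x₁)) = e * (x₂ + (r - x₁) - r) + L :=
      T_lin _ _ _ _ hδ hL.le (by linarith)
    have t3 : T r L δ (x₂ - δ + (r - x₂)) = 0 := T_zero _ _ _ _ hδ hL.le (by linarith)
    have t4 : T r L δ (x₂ + (r - (x₂ - δ))) = e * (x₂ + (r - (x₂ - δ)) - r) + L :=
      T_lin _ _ _ _ hδ hL.le (by linarith)
    simp only [J₁] at hne
    rw [t1, t2, t3, t4] at hne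
    nlinarith [mul_nonneg (show (0:ℝ) ≤ r - x₂ by linarith)
        (show (0:ℝ) ≤ e * (x₂ - x₁) - e * δ by nlinarith),
      mul_pos (show (0:ℝ) < x₂ - x₁ - δ by linarith)
        (show (0:ℝ) < c + L + e * (x₂ - x₁) by nlinarith)]
  -- exact quadratic forms on the middle region
  set B₁ := -(2 * e * x₂ + e * r + c) with hB₁
  set B₂ := -(2 * e * x₁ + e * r + c) with hB₂
  have hJ1 : ∀ y ∈ Set.Icc (max 0 (x₂ - δ)) (min r (x₂ + δ)),
      J₁ r L δ c y x₂ = 2 * e * y ^ 2 + B₁ * y + r * (c + L + e * x₂) := by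
    intro y hy
    obtain ⟨hy1, hy2⟩ := hy
    have hy1' : x₂ - δ ≤ y := le_trans (le_max_right _ _) hy1
    have hy2' : y ≤ x₂ + δ := le_trans hy2 (min_le_right _ _)
    have t1 : T r L δ (y + (r - x₂)) = e * (y + (r - x₂) - r) + L :=
      T_lin _ _ _ _ hδ hL.le (by linarith)
    have t2 : T r L δ (x₂ + (r - y)) = e * (x₂ + (r - y) - r) + L :=
      T_lin _ _ _ _ hδ hL.le (by linarith)
    simp only [J₁]
    rw [t1, t2, hB₁]
    ring
  have hJ2 : ∀ y ∈ Set.Icc (max 0 (x₁ - δ)) (min r (x₁ + δ)),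
      J₂ r L δ c x₁ y = 2 * e * y ^ 2 + B₂ * y + r * (c + L + e * x₁) := by
    intro y hy
    obtain ⟨hy1, hy2⟩ := hy
    have hy1' : x₁ - δ ≤ y := le_trans (le_max_right _ _) hy1
    have hy2' : y ≤ x₁ + δ := le_trans hy2 (min_le_right _ _)
    have t1 : T r L δ (y + (r - x₁)) = e * (y + (r - x₁) - r) + L :=
      T_lin _ _ _ _ hδ hL.le (by linarith)
    have t2 : T r L δ (x₁ + (r - y)) = e * (x₁ + (r - y) - r) + L :=
      T_lin _ _ _ _ hδ hL.le (by linarith)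
    simp only [J₂]
    rw [t1, t2, hB₂]
    ring
  have haM : x₁ ∈ Set.Icc (max 0 (x₂ - δ)) (min r (x₂ + δ)) :=
    ⟨max_le ha0 (by linarith), le_min har (by linarith)⟩
  have hbM : x₂ ∈ Set.Icc (max 0 (x₁ - δ)) (min r (x₁ + δ)) :=
    ⟨max_le hb0 (by linarith), le_min hbr (by linarith)⟩
  have hmin₁ : ∀ y ∈ Set.Icc (max 0 (x₂ - δ)) (min r (x₂ + δ)),
      2 * e * x₁ ^ 2 + B₁ * x₁ ≤ 2 * e * y ^ 2 + B₁ * y := by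
    intro y hy
    have hy' : y ∈ Set.Icc (0:ℝ) r :=
      ⟨le_trans (le_max_left _ _) hy.1, le_trans hy.2 (min_le_left _ _)⟩
    have hne := hNE₁ y hy'
    rw [hJ1 x₁ haM, hJ1 y hy] at hne
    linarith
  have hmin₂ : ∀ y ∈ Set.Icc (max 0 (x₁ - δ)) (min r (x₁ + δ)),
      2 * e * x₂ ^ 2 + B₂ * x₂ ≤ 2 * e * y ^ 2 + B₂ * y := by
    intro y hy
    have hy' : y ∈ Set.Icc (0:ℝ) r :=
      ⟨le_trans (le_max_left _ _) hy.1, le_trans hy.2 (min_le_left _ _)⟩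
    have hne := hNE₂ y hy'
    rw [hJ2 x₂ hbM, hJ2 y hy] at hne
    linarith
  have hP1 : max 0 (x₂ - δ) < x₁ → 2 * (2 * e) * x₁ + B₁ ≤ 0 := fun h =>
    quad_min_left (2 * e) B₁ _ _ _ (by positivity) haM hmin₁ h
  have hP2 : x₁ < min r (x₂ + δ) → 0 ≤ 2 * (2 * e) * x₁ + B₁ := fun h =>
    quad_min_right (2 * e) B₁ _ _ _ (by positivity) haM hmin₁ h
  have hP3 : max 0 (x₁ - δ) < x₂ → 2 * (2 * e) * x₂ + B₂ ≤ 0 := fun h =>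
    quad_min_left (2 * e) B₂ _ _ _ (by positivity) hbM hmin₂ h
  have hP4 : x₂ < min r (x₁ + δ) → 0 ≤ 2 * (2 * e) * x₂ + B₂ := fun h =>
    quad_min_right (2 * e) B₂ _ _ _ (by positivity) hbM hmin₂ h
  -- x₁ = x₂
  have hab : x₁ = x₂ := by
    rcases lt_trichotomy x₁ x₂ with h | h | h
    · have h1 := hP2 (lt_min (lt_of_lt_of_le h hbr) (by linarith))
      have h2 := hP3 (max_lt (lt_of_le_of_lt ha0 h) (by linarith))
      rw [hB₁] at h1; rw [hB₂] at h2
      nlinarith [mul_pos hE0 (sub_pos.2 h)]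
    · exact h
    · have h1 := hP4 (lt_min (lt_of_lt_of_le h har) (by linarith))
      have h2 := hP1 (max_lt (lt_of_le_of_lt hb0 h) (by linarith))
      rw [hB₂] at h1; rw [hB₁] at h2
      nlinarith [mul_pos hE0 (sub_pos.2 h)]
  -- x₁ > 0
  have hx1pos : 0 < x₁ := by
    rcases ha0.lt_or_eq with h | h
    · exact h
    · exfalso
      have h1 := hP2 (lt_min (by linarith) (by rw [← hab, ← h]; linarith))
      rw [hB₁, ← hab, ← h] at h1
      nlinarith [mul_pos hE0 hr]
  have hd1 : 2 * (2 * e) * x₁ + B₁ ≤ 0 :=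
    hP1 (max_lt hx1pos (by rw [← hab]; linarith))
  -- x₁ < r
  have hx1r : x₁ < r := by
    rcases har.lt_or_eq with h | h
    · exact h
    · exfalso
      rw [hB₁, ← hab, h] at hd1
      have h2 : e * r ≤ c := by nlinarith
      nlinarith [mul_le_mul_of_nonneg_right h2 hδ.le]
  have hd2 : 0 ≤ 2 * (2 * e) * x₁ + B₁ :=
    hP2 (lt_min hx1r (by rw [← hab]; linarith))
  have hd0 : 2 * e * x₁ - e * r - c = 0 := by
    rw [hB₁, ← hab] at hd1 hd2; linarith
  rw [he] at hd0
  field_simp at hd0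
  have hx1 : x₁ = r / 2 + ζ := by
    rw [hζ]
    field_simp
    linarith
  exact ⟨hx1, hab ▸ hx1⟩
end

section
/- In the two-user routing game on the load-balancing network, the socially optimal flow is for each user to route entirely on his local link: the profile (r, r) is the unique minimizer of the total cost J₁(x₁, x₂) + J₂(x₁, x₂) over (x₁, x₂) ∈ [0,r]², and the minimum total cost equals 2rL. -/
/-- Key lower bound: for `x ≥ 0`, `δ * (x * T x)` dominates the quadratic. -/
lemma key_lb (r L δ x : ℝ) (hδ : 0 < δ) (hx : 0 ≤ x) :
    L * δ * x + r * L * (x - r) + L * (x - r) ^ 2 ≤ δ * (x * T r L δ x) := by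
  have h1 : x * (L / δ * (x - r) + L) ≤ x * T r L δ x :=
    mul_le_mul_of_nonneg_left (le_max_right _ _) hx
  have h2 : δ * (x * (L / δ * (x - r) + L)) =
      L * δ * x + r * L * (x - r) + L * (x - r) ^ 2 := by
    field_simp
    ring
  nlinarith [mul_le_mul_of_nonneg_left h1 hδ.le]

theorem social_optimum_all_local
    (r L δ c : ℝ) (hδ : 0 < δ) (hδL : δ < L) (hLc : L < c) (hcδ : c * δ < r * L) :
    J₁ r L δ c r r + J₂ r L δ c r r = 2 * r * L ∧
    (∀ x₁ ∈ Set.Icc (0 : ℝ) r, ∀ x₂ ∈ Set.Icc (0 : ℝ) r,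
      2 * r * L ≤ J₁ r L δ c x₁ x₂ + J₂ r L δ c x₁ x₂) ∧
    (∀ x₁ ∈ Set.Icc (0 : ℝ) r, ∀ x₂ ∈ Set.Icc (0 : ℝ) r,
      J₁ r L δ c x₁ x₂ + J₂ r L δ c x₁ x₂ = 2 * r * L → x₁ = r ∧ x₂ = r) := by
  have hL : 0 < L := hδ.trans hδL
  have hc : 0 < c := hL.trans hLc
  have hval : J₁ r L δ c r r + J₂ r L δ c r r = 2 * r * L := by
    simp [J₁, J₂, T, max_eq_right hL.le]
    ring
  -- main estimate: for x₁, x₂ in [0, r],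
  -- δ*(J₁+J₂) ≥ 2rLδ + 2L(x₁-x₂)² + δc(2r-x₁-x₂)
  have main : ∀ x₁ ∈ Set.Icc (0 : ℝ) r, ∀ x₂ ∈ Set.Icc (0 : ℝ) r,
      δ * (2 * r * L) + 2 * L * (x₁ - x₂) ^ 2 + δ * c * (2 * r - x₁ - x₂)
        ≤ δ * (J₁ r L δ c x₁ x₂ + J₂ r L δ c x₁ x₂) := by
    rintro x₁ ⟨h10, h1r⟩ x₂ ⟨h20, h2r⟩
    have hf1 : (0:ℝ) ≤ x₁ + (r - x₂) := by linarith
    have hf2 : (0:ℝ) ≤ x₂ + (r - x₁) := by linarith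
    have k1 := key_lb r L δ (x₁ + (r - x₂)) hδ hf1
    have k2 := key_lb r L δ (x₂ + (r - x₁)) hδ hf2
    simp only [J₁, J₂]
    nlinarith [k1, k2]
  refine ⟨hval, ?_, ?_⟩
  · rintro x₁ hx₁ x₂ hx₂
    have h := main x₁ hx₁ x₂ hx₂
    obtain ⟨h10, h1r⟩ := hx₁
    obtain ⟨h20, h2r⟩ := hx₂
    have hsq : (0:ℝ) ≤ 2 * L * (x₁ - x₂) ^ 2 := by positivity
    have hcc : (0:ℝ) ≤ δ * c * (2 * r - x₁ - x₂) := by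
      have : (0:ℝ) ≤ 2 * r - x₁ - x₂ := by linarith
      positivity
    nlinarith
  · rintro x₁ hx₁ x₂ hx₂ heq
    have h := main x₁ hx₁ x₂ hx₂
    obtain ⟨h10, h1r⟩ := hx₁
    obtain ⟨h20, h2r⟩ := hx₂
    rw [heq] at h
    have hsq : (0:ℝ) ≤ 2 * L * (x₁ - x₂) ^ 2 := by positivity
    have hnn : (0:ℝ) ≤ 2 * r - x₁ - x₂ := by linarith
    have hcc : (0:ℝ) ≤ δ * c * (2 * r - x₁ - x₂) := by positivity
    have hs0 : (x₁ - x₂) ^ 2 = 0 := by nlinarith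
    have hxe : x₁ = x₂ := by
      have := pow_eq_zero_iff (n := 2) (by norm_num) |>.mp hs0
      linarith [sub_eq_zero.mp this]
    have hsum : 2 * r - x₁ - x₂ = 0 := by
      by_contra hne
      have hgt : 0 < 2 * r - x₁ - x₂ := lt_of_le_of_ne hnn (Ne.symm hne)
      nlinarith [mul_pos (mul_pos hδ hc) hgt]
    constructor <;> linarith
end

section
/- The Price of Anarchy of the two-user selfish routing game on the load-balancing network can be arbitrarily large: for every r > 0, L > 0 and every M > 0, there exist δ and c with 0 < δ < L < c and cδ < rL such that 1 + ((r/2 − ζ)c)/(rL) > M, where ζ = cδ/(2L). -/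
/-!
Shrinking `δ` as `c` grows keeps `c δ ≤ r L / 2`, i.e. `ζ ≤ r / 4`, so the Price of Anarchy
is at least `1 + c / (4 L)`, which is unbounded in `c`.
-/

noncomputable def priceOfAnarchy (r L δ c : ℝ) : ℝ :=
  1 + (r / 2 - c * δ / (2 * L)) * c / (r * L)

lemma exists_pos_lt_mul_le_half {r L c : ℝ} (hr : 0 < r) (hL : 0 < L) (hc : 0 < c) :
    ∃ δ : ℝ, 0 < δ ∧ δ < L ∧ c * δ ≤ r * L / 2 := by
  refine ⟨min (L / 2) (r * L / (2 * c)), by positivity,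
    (min_le_left _ _).trans_lt (half_lt_self hL), ?_⟩
  calc c * min (L / 2) (r * L / (2 * c)) ≤ c * (r * L / (2 * c)) :=
        mul_le_mul_of_nonneg_left (min_le_right _ _) hc.le
    _ = r * L / 2 := by field_simp

lemma one_add_div_le_priceOfAnarchy {r L δ c : ℝ} (hr : 0 < r) (hL : 0 < L) (hc : 0 ≤ c)
    (hcδ : c * δ ≤ r * L / 2) : 1 + c / (4 * L) ≤ priceOfAnarchy r L δ c := by
  have hζ : c * δ / (2 * L) ≤ r / 4 := by
    rw [div_le_iff₀ (by positivity)]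
    linarith
  calc 1 + c / (4 * L) = 1 + r / 4 * c / (r * L) := by field_simp
    _ ≤ priceOfAnarchy r L δ c := by
      unfold priceOfAnarchy
      gcongr
      linarith

theorem price_of_anarchy_unbounded_general
    (r L : ℝ) (hr : 0 < r) (hL : 0 < L) (M : ℝ) :
    ∃ δ c : ℝ, 0 < δ ∧ δ < L ∧ L < c ∧ c * δ < r * L ∧
      1 + (r / 2 - c * δ / (2 * L)) * c / (r * L) > M := by
  set c := max (L + 1) (4 * L * M)
  have hLc : L < c := (lt_add_one L).trans_le (le_max_left _ _)
  have hc : 0 < c := hL.trans hLc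
  obtain ⟨δ, hδ, hδL, hcδ⟩ := exists_pos_lt_mul_le_half hr hL hc
  refine ⟨δ, c, hδ, hδL, hLc, hcδ.trans_lt (half_lt_self (by positivity)), ?_⟩
  have hMc : M ≤ c / (4 * L) := by
    rw [le_div_iff₀ (by positivity)]
    linarith [le_max_right (L + 1) (4 * L * M)]
  calc M < 1 + c / (4 * L) := by linarith
    _ ≤ priceOfAnarchy r L δ c := one_add_div_le_priceOfAnarchy hr hL hc.le hcδ

theorem price_of_anarchy_unbounded
    (r L : ℝ) (hr : 0 < r) (hL : 0 < L) (M : ℝ) (hM : 0 < M) :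
    ∃ δ c : ℝ, 0 < δ ∧ δ < L ∧ L < c ∧ c * δ < r * L ∧
      1 + (r / 2 - c * δ / (2 * L)) * c / (r * L) > M :=
  price_of_anarchy_unbounded_general r L hr hL M
end

section
/- In the non-atomic (Wardrop) routing game on the load-balancing network, (r, r) is the unique Wardrop equilibrium, and its total cost r·T(r) + r·T(r) = 2rL equals the minimum over (y₁, y₂) ∈ [0,r]² of the total cost y₁·T(f₁) + (r − y₁)(c + T(f₂)) + y₂·T(f₂) + (r − y₂)(c + T(f₁)); hence the Price of Anarchy of the non-atomic game equals 1. -/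
/-- Wardrop equilibrium of the non-atomic load-balancing game: `y₁, y₂ ∈ [0, r]`,
and for each population a used path has latency at most that of the other path. -/
def IsWardrop (r L δ c y₁ y₂ : ℝ) : Prop :=
  y₁ ∈ Set.Icc (0 : ℝ) r ∧ y₂ ∈ Set.Icc (0 : ℝ) r ∧
  (0 < y₁ → T r L δ (y₁ + (r - y₂)) ≤ c + T r L δ (y₂ + (r - y₁))) ∧
  (y₁ < r → c + T r L δ (y₂ + (r - y₁)) ≤ T r L δ (y₁ + (r - y₂))) ∧
  (0 < y₂ → T r L δ (y₂ + (r - y₁)) ≤ c + T r L δ (y₁ + (r - y₂))) ∧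
  (y₂ < r → c + T r L δ (y₁ + (r - y₂)) ≤ T r L δ (y₂ + (r - y₁)))

/-- Total cost of the non-atomic flow `(y₁, y₂)`. -/
noncomputable def totalCost (r L δ c y₁ y₂ : ℝ) : ℝ :=
  y₁ * T r L δ (y₁ + (r - y₂)) + (r - y₁) * (c + T r L δ (y₂ + (r - y₁))) +
  (y₂ * T r L δ (y₂ + (r - y₁)) + (r - y₂) * (c + T r L δ (y₁ + (r - y₂))))

lemma T_at_r (r L δ : ℝ) (hL : 0 ≤ L) : T r L δ r = L := by
  unfold T
  rw [sub_self, mul_zero, zero_add, max_eq_right hL]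

lemma key (r L δ t : ℝ) (hδ : 0 < δ) (hL : 0 < L) (hr : 0 < r) (ht : 0 ≤ t) :
    2 * r * L ≤ (r + t) * T r L δ (r + t) + (r - t) * T r L δ (r - t) := by
  have hq : 0 < L / δ := div_pos hL hδ
  have h1 : T r L δ (r + t) = L / δ * t + L := by
    unfold T
    rw [show r + t - r = t by ring, max_eq_right]
    positivity
  rcases le_or_gt t δ with h | h
  · have h2 : T r L δ (r - t) = L / δ * (-t) + L := by
      unfold T
      rw [show r - t - r = -t by ring, max_eq_right]
      have : L / δ * t ≤ L / δ * δ := by nlinarith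
      rw [div_mul_cancel₀ L hδ.ne'] at this
      linarith
    rw [h1, h2]
    nlinarith [mul_nonneg (mul_nonneg hq.le ht) ht]
  · have h2 : T r L δ (r - t) = 0 := by
      unfold T
      rw [show r - t - r = -t by ring, max_eq_left]
      have : L / δ * δ < L / δ * t := by nlinarith
      rw [div_mul_cancel₀ L hδ.ne'] at this
      linarith
    rw [h1, h2, mul_zero, add_zero]
    have hδt : L / δ * δ < L / δ * t := by nlinarith
    rw [div_mul_cancel₀ L hδ.ne'] at hδt
    nlinarith

theorem wardrop_unique_and_efficient
    (r L δ c : ℝ) (hδ : 0 < δ) (hδL : δ < L) (hLc : L < c) (hcδ : c * δ < r * L) :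
    (∀ y₁ y₂ : ℝ, IsWardrop r L δ c y₁ y₂ → y₁ = r ∧ y₂ = r) ∧
    totalCost r L δ c r r = 2 * r * L ∧
    (∀ y₁ ∈ Set.Icc (0 : ℝ) r, ∀ y₂ ∈ Set.Icc (0 : ℝ) r,
      totalCost r L δ c r r ≤ totalCost r L δ c y₁ y₂) ∧
    totalCost r L δ c r r /
      sInf ((fun p : ℝ × ℝ => totalCost r L δ c p.1 p.2) ''
        (Set.Icc (0 : ℝ) r ×ˢ Set.Icc (0 : ℝ) r)) = 1 := by
  have hL : 0 < L := lt_trans hδ hδL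
  have hc : 0 < c := lt_trans hL hLc
  have hr : 0 < r := by nlinarith
  have hq : 0 < L / δ := div_pos hL hδ
  -- helper: if c ≤ T r L δ x then x > r
  have hTgt : ∀ x : ℝ, c ≤ T r L δ x → r < x := by
    intro x hx
    unfold T at hx
    rcases le_or_gt (L / δ * (x - r) + L) 0 with h | h
    · rw [max_eq_left h] at hx; linarith
    · rw [max_eq_right h.le] at hx
      have h2 : 0 < L / δ * (x - r) := by linarith
      by_contra hxr
      push_neg at hxr
      nlinarith [mul_nonneg hq.le (show (0:ℝ) ≤ r - x by linarith)]
  -- cost at (r, r)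
  have hTr : T r L δ r = L := T_at_r r L δ hL.le
  have hcost_rr : totalCost r L δ c r r = 2 * r * L := by
    unfold totalCost
    rw [show r + (r - r) = r by ring, hTr]
    ring
  -- minimality
  have hmin : ∀ y₁ ∈ Set.Icc (0 : ℝ) r, ∀ y₂ ∈ Set.Icc (0 : ℝ) r,
      totalCost r L δ c r r ≤ totalCost r L δ c y₁ y₂ := by
    rintro y₁ ⟨h10, h1r⟩ y₂ ⟨h20, h2r⟩
    rw [hcost_rr]
    have hdecomp : totalCost r L δ c y₁ y₂ =
        (y₁ + (r - y₂)) * T r L δ (y₁ + (r - y₂)) +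
        (y₂ + (r - y₁)) * T r L δ (y₂ + (r - y₁)) + c * (2 * r - y₁ - y₂) := by
      unfold totalCost; ring
    rw [hdecomp]
    have hcterm : 0 ≤ c * (2 * r - y₁ - y₂) := by nlinarith
    rcases le_or_gt y₂ y₁ with h | h
    · have := key r L δ (y₁ - y₂) hδ hL hr (by linarith)
      rw [show r + (y₁ - y₂) = y₁ + (r - y₂) by ring,
          show r - (y₁ - y₂) = y₂ + (r - y₁) by ring] at this
      linarith
    · have := key r L δ (y₂ - y₁) hδ hL hr (by linarith)
      rw [show r + (y₂ - y₁) = y₂ + (r - y₁) by ring,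
          show r - (y₂ - y₁) = y₁ + (r - y₂) by ring] at this
      linarith
  refine ⟨?_, hcost_rr, hmin, ?_⟩
  · rintro y₁ y₂ ⟨⟨h10, h1r⟩, ⟨h20, h2r⟩, hw1, hw2, hw3, hw4⟩
    have hy1 : y₁ = r := by
      by_contra h
      have h1lt : y₁ < r := lt_of_le_of_ne h1r h
      have hA := hw2 h1lt
      have hT2 : (0:ℝ) ≤ T r L δ (y₂ + (r - y₁)) := le_max_left _ _
      have hcT : c ≤ T r L δ (y₁ + (r - y₂)) := by linarith
      have hgt := hTgt _ hcT
      have h2lt : y₂ < r := by linarith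
      have hB := hw4 h2lt
      linarith
    have hy2 : y₂ = r := by
      by_contra h
      have h2lt : y₂ < r := lt_of_le_of_ne h2r h
      have hB := hw4 h2lt
      have hT1 : (0:ℝ) ≤ T r L δ (y₁ + (r - y₂)) := le_max_left _ _
      have hcT : c ≤ T r L δ (y₂ + (r - y₁)) := by linarith
      have hgt := hTgt _ hcT
      linarith
    exact ⟨hy1, hy2⟩
  · -- sInf computation
    set S := ((fun p : ℝ × ℝ => totalCost r L δ c p.1 p.2) ''
        (Set.Icc (0 : ℝ) r ×ˢ Set.Icc (0 : ℝ) r)) with hS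
    have hmem : totalCost r L δ c r r ∈ S := by
      exact ⟨(r, r), ⟨⟨hr.le, le_refl r⟩, ⟨hr.le, le_refl r⟩⟩, rfl⟩
    have hlb : ∀ x ∈ S, totalCost r L δ c r r ≤ x := by
      rintro x ⟨⟨y₁, y₂⟩, ⟨hy1, hy2⟩, rfl⟩
      exact hmin y₁ hy1 y₂ hy2
    have hinf : sInf S = totalCost r L δ c r r := by
      apply le_antisymm
      · exact csInf_le ⟨_, hlb⟩ hmem
      · exact le_csInf ⟨_, hmem⟩ hlb
    rw [hinf, div_self]
    rw [hcost_rr]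
    nlinarith
end

section
/- In the two-user routing game on the load-balancing network, if additionally 0 < 4δ < r and c < (r − 4δ)L/δ, then the selfish user 2's best response to user 1's load-taker strategy x₁ = r is the delta-load-taker strategy: x₂ = r − δ is the unique minimizer of J₂(r, ·) over [0, r]. -/
/-!
With user 1 playing `x₁ = r`, write `y = r - x₂` for the flow user 2 sends over the cross link.
Link `l₂` carries `r - y`, which lies below the elbow `r - δ` exactly when `y ≥ δ`, and link `l₁`
carries `r + y`, always above it. So `J₂` is an explicit quadratic in `y` on each side of `y = δ`,
and in both pieces its excess over the value `δ (c + 2L)` at `y = δ` factors with the root `y = δ`.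
For `y > δ` the cofactor is positive because `c ≥ 0`; for `y < δ` it is positive by
the bound `c δ < (r - 4δ) L`.
-/

section Elbow

variable {r L δ : ℝ}

theorem T_eq_max_sub_elbow (hδ : δ ≠ 0) (x : ℝ) :
    T r L δ x = max 0 (L / δ * (x - (r - δ))) := by
  rw [T]
  congr 1
  field_simp
  ring

theorem T_eq_zero_of_le_elbow (hδ : 0 < δ) (hL : 0 ≤ L) {x : ℝ} (hx : x ≤ r - δ) :
    T r L δ x = 0 := by
  rw [T_eq_max_sub_elbow hδ.ne']
  exact max_eq_left (mul_nonpos_of_nonneg_of_nonpos (by positivity) (by linarith))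

theorem T_eq_of_elbow_le (hδ : 0 < δ) (hL : 0 ≤ L) {x : ℝ} (hx : r - δ ≤ x) :
    T r L δ x = L / δ * (x - r) + L := by
  rw [T_eq_max_sub_elbow hδ.ne', max_eq_right (mul_nonneg (by positivity) (by linarith))]
  field_simp
  ring

end Elbow

section LoadTaker

variable (r : ℝ) {L δ : ℝ} (c : ℝ) {y : ℝ}

theorem J₂_load_taker_eq (y : ℝ) :
    J₂ r L δ c r (r - y) = (r - y) * T r L δ (r - y) + y * (c + T r L δ (r + y)) := by
  simp only [J₂, sub_self, add_zero, sub_sub_cancel]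

theorem J₂_load_taker_sub_of_delta_le (hδ : 0 < δ) (hL : 0 ≤ L) (hy : δ ≤ y) :
    J₂ r L δ c r (r - y) - δ * (c + 2 * L) = (y - δ) * (c + L / δ * (y + 2 * δ)) := by
  rw [J₂_load_taker_eq, T_eq_zero_of_le_elbow hδ hL (by linarith),
    T_eq_of_elbow_le hδ hL (by linarith)]
  field_simp
  ring

theorem J₂_load_taker_sub_of_le_delta (hδ : 0 < δ) (hL : 0 ≤ L) (hy0 : 0 ≤ y) (hy : y ≤ δ) :
    J₂ r L δ c r (r - y) - δ * (c + 2 * L) = (δ - y) * (L / δ * (r - 2 * y - 2 * δ) - c) := by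
  rw [J₂_load_taker_eq, T_eq_of_elbow_le hδ hL (by linarith),
    T_eq_of_elbow_le hδ hL (by linarith)]
  field_simp
  ring

theorem J₂_load_taker_lt_of_ne_delta (hδ : 0 < δ) (hL : 0 < L) (hc0 : 0 ≤ c)
    (hc : c < (r - 4 * δ) * L / δ) (hy0 : 0 ≤ y) (hy : y ≠ δ) :
    J₂ r L δ c r (r - δ) < J₂ r L δ c r (r - y) := by
  have hbase := J₂_load_taker_sub_of_delta_le r c hδ hL.le le_rfl
  rw [sub_self, zero_mul] at hbase
  rcases hy.lt_or_gt with hlt | hgt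
  · have hfactor := J₂_load_taker_sub_of_le_delta r c hδ hL.le hy0 hlt.le
    have hcofactor : 0 < L / δ * (r - 2 * y - 2 * δ) - c := by
      have : (r - 4 * δ) * L / δ < L / δ * (r - 2 * y - 2 * δ) := by
        rw [show (r - 4 * δ) * L / δ = L / δ * (r - 4 * δ) by ring]
        exact mul_lt_mul_of_pos_left (by linarith) (by positivity)
      linarith
    linarith [mul_pos (sub_pos.mpr hlt) hcofactor]
  · have hfactor := J₂_load_taker_sub_of_delta_le r c hδ hL.le hgt.le
    have hcofactor : 0 < c + L / δ * (y + 2 * δ) := by positivity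
    linarith [mul_pos (sub_pos.mpr hgt) hcofactor]

end LoadTaker

theorem best_response_of_selfish_user_is_delta_load_taker_general
    (r L δ c : ℝ) (hδ : 0 < δ) (hδL : δ < L) (hLc : L < c)
    (hr : 4 * δ < r) (hc : c < (r - 4 * δ) * L / δ) :
    (r - δ) ∈ Set.Icc (0 : ℝ) r ∧
    (∀ x₂ ∈ Set.Icc (0 : ℝ) r, J₂ r L δ c r (r - δ) ≤ J₂ r L δ c r x₂) ∧
    (∀ x₂ ∈ Set.Icc (0 : ℝ) r, J₂ r L δ c r x₂ = J₂ r L δ c r (r - δ) → x₂ = r - δ) := by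
  have hL : 0 < L := hδ.trans hδL
  have lt_of_ne : ∀ x₂ ∈ Set.Icc (0 : ℝ) r, x₂ ≠ r - δ →
      J₂ r L δ c r (r - δ) < J₂ r L δ c r x₂ := by
    rintro x₂ ⟨-, hx₂r⟩ hne
    have h := J₂_load_taker_lt_of_ne_delta r c hδ hL (by linarith) hc (y := r - x₂) (by linarith)
      (fun h => hne (by linarith))
    rwa [sub_sub_cancel] at h
  refine ⟨⟨by linarith, by linarith⟩, fun x₂ hx₂ => ?_, fun x₂ hx₂ heq => ?_⟩
  · rcases eq_or_ne x₂ (r - δ) with rfl | hne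
    · exact le_rfl
    · exact (lt_of_ne x₂ hx₂ hne).le
  · by_contra hne
    exact (lt_of_ne x₂ hx₂ hne).ne' heq

theorem best_response_of_selfish_user_is_delta_load_taker
    (r L δ c : ℝ) (hδ : 0 < δ) (hδL : δ < L) (hLc : L < c) (hcδ : c * δ < r * L)
    (hr : 4 * δ < r) (hc : c < (r - 4 * δ) * L / δ) :
    (r - δ) ∈ Set.Icc (0 : ℝ) r ∧
    (∀ x₂ ∈ Set.Icc (0 : ℝ) r, J₂ r L δ c r (r - δ) ≤ J₂ r L δ c r x₂) ∧
    (∀ x₂ ∈ Set.Icc (0 : ℝ) r, J₂ r L δ c r x₂ = J₂ r L δ c r (r - δ) → x₂ = r - δ) :=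
  best_response_of_selfish_user_is_delta_load_taker_general r L δ c hδ hδL hLc hr hc
end

section
/- In the two-user routing game on the load-balancing network, if additionally 0 < 2δ < r and c ≥ 4L, then for every degree of cooperation β ∈ (1/2, 1], the altruistic user 1's best response to user 2's delta-load-taker strategy x₂ = r − δ is the load-taker strategy: x₁ = r minimizes the perceived cost Ĵ₁(·, r − δ) = (1 − β)·J₁(·, r − δ) + β·J₂(·, r − δ) over [0, r]. -/
/-- Perceived cost of the unilaterally altruistic user 1 with degree of cooperation `β`. -/
noncomputable def Jhat₁ (r L δ c β x₁ x₂ : ℝ) : ℝ :=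
  (1 - β) * J₁ r L δ c x₁ x₂ + β * J₂ r L δ c x₁ x₂

/-!
Against `x₂ = r - δ`, put `u = r - x₁` and `k = L / δ`. Link `l₂` is then always on the rising
branch of the elbow, `T(f₂) = k u`, while `T(f₁) ≥ 2L - k u` with equality at `u = 0`. The latency
`T(f₁)` enters `Ĵ₁` with the nonnegative weight `(1 - β) x₁ + β δ`, so replacing it by this linear
minorant bounds `Ĵ₁` below by a quadratic in `u` that agrees with `Ĵ₁` at `u = 0`, has leading
coefficient `2 (1 - β) k ≥ 0` and slope `(2β - 1)(r k - c) + β c - 2L ≥ 0` there: the first summand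
because `c < r k` and `β > 1/2`, the second because `β c ≥ c / 2 ≥ 2L`.
-/

section Latency

variable {r L δ : ℝ}

theorem T_sub_add (hδ : δ ≠ 0) (hk : 0 ≤ L / δ) {u : ℝ} (hu : 0 ≤ u) :
    T r L δ (r - δ + u) = L / δ * u := by
  rw [T, show L / δ * (r - δ + u - r) + L = L / δ * u by field_simp; ring,
    max_eq_right (mul_nonneg hk hu)]

theorem T_sub (hδ : δ ≠ 0) : T r L δ (r - δ) = 0 := by
  rw [T, show L / δ * (r - δ - r) + L = 0 by field_simp; ring, max_self]

theorem T_add (hδ : δ ≠ 0) (hL : 0 ≤ L) : T r L δ (r + δ) = 2 * L := by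
  rw [T, show L / δ * (r + δ - r) + L = 2 * L by field_simp; ring, max_eq_right (by linarith)]

theorem two_mul_sub_le_T_add (hδ : δ ≠ 0) (x : ℝ) :
    2 * L - L / δ * (r - x) ≤ T r L δ (x + δ) := by
  refine le_trans (le_of_eq ?_) (le_max_right _ _)
  field_simp
  ring

end Latency

theorem Jhat₁_eq_load_taker_add {r L δ c β x₁ : ℝ} (hδ : 0 < δ) (hL : 0 ≤ L)
    (hxr : x₁ ≤ r) :
    Jhat₁ r L δ c β x₁ (r - δ) = Jhat₁ r L δ c β r (r - δ)
        + (r - x₁) * ((2 * β - 1) * (r * (L / δ) - c) + β * c - 2 * L)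
        + 2 * (1 - β) * (L / δ) * (r - x₁) ^ 2
        + ((1 - β) * x₁ + β * δ) * (T r L δ (x₁ + δ) - (2 * L - L / δ * (r - x₁))) := by
  simp only [Jhat₁, J₁, J₂, sub_sub_cancel, sub_self, add_zero, T_add hδ.ne' hL, T_sub hδ.ne',
    T_sub_add hδ.ne' (div_nonneg hL hδ.le) (sub_nonneg.2 hxr)]
  field_simp
  ring

theorem best_response_of_altruistic_user_is_load_taker_general
    (r L δ c : ℝ) (hδ : 0 < δ) (hδL : δ < L) (hcδ : c * δ < r * L)
    (hc : 4 * L ≤ c)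
    (β : ℝ) (hβ : β ∈ Set.Ioc (1 / 2 : ℝ) 1) :
    ∀ x₁ ∈ Set.Icc (0 : ℝ) r,
      Jhat₁ r L δ c β r (r - δ) ≤ Jhat₁ r L δ c β x₁ (r - δ) := by
  rintro x₁ ⟨hx₀, hxr⟩
  obtain ⟨hβ_gt, hβ_le⟩ := hβ
  have hL : 0 < L := hδ.trans hδL
  have hk : 0 < L / δ := div_pos hL hδ
  have hc_lt : c < r * (L / δ) := by rwa [mul_div_assoc', lt_div_iff₀ hδ]
  have hslope : 0 ≤ (2 * β - 1) * (r * (L / δ) - c) + β * c - 2 * L := by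
    linarith [mul_nonneg (by linarith : 0 ≤ 2 * β - 1) (by linarith : 0 ≤ r * (L / δ) - c),
      mul_nonneg (by linarith : 0 ≤ β - 1 / 2) (by linarith : 0 ≤ c)]
  have hcurv : 0 ≤ 2 * (1 - β) * (L / δ) * (r - x₁) ^ 2 := by
    have : 0 ≤ 1 - β := by linarith
    positivity
  have hweight : 0 ≤ (1 - β) * x₁ + β * δ :=
    add_nonneg (mul_nonneg (by linarith) hx₀) (mul_nonneg (by linarith) hδ.le)
  have hT₁ := sub_nonneg.2 (two_mul_sub_le_T_add (r := r) (L := L) hδ.ne' x₁)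
  rw [Jhat₁_eq_load_taker_add hδ hL.le hxr]
  linarith [mul_nonneg (sub_nonneg.2 hxr) hslope, mul_nonneg hweight hT₁]

theorem best_response_of_altruistic_user_is_load_taker
    (r L δ c : ℝ) (hδ : 0 < δ) (hδL : δ < L) (hLc : L < c) (hcδ : c * δ < r * L)
    (hr : 2 * δ < r) (hc : 4 * L ≤ c)
    (β : ℝ) (hβ : β ∈ Set.Ioc (1 / 2 : ℝ) 1) :
    ∀ x₁ ∈ Set.Icc (0 : ℝ) r,
      Jhat₁ r L δ c β r (r - δ) ≤ Jhat₁ r L δ c β x₁ (r - δ) :=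
  best_response_of_altruistic_user_is_load_taker_general r L δ c hδ hδL hcδ hc β hβ
end

section
/- In the two-user altruistic routing game on the load-balancing network, if additionally 0 < 4δ < r, c ≥ 4L and c < (r − 4δ)L/δ, then for every β ∈ (1/2, 1] the profile (x₁, x₂) = (r, r − δ) is a Nash equilibrium of the game in which user 1 minimizes the perceived cost Ĵ₁ = (1 − β)J₁ + βJ₂ and user 2 minimizes J₂: x₁ = r minimizes Ĵ₁(·, r − δ) over [0, r], and x₂ = r − δ minimizes J₂(r, ·) over [0, r]. -/
/-!
With `k = L / δ`, at the profile `(r, r - δ)` link `l₁` carries `r + δ` (latency `2L`) and `l₂`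
carries `r - δ` (latency `0`). Since `Ĵ₁ = (1 - β)(J₁ + J₂) + (2β - 1) J₂` with both weights
nonnegative for `β ∈ [1/2, 1]`, it suffices that `x₁ = r` minimizes both the social cost and `J₂`
along `x₂ = r - δ`: bounding the elbow from below by its affine part, the excess social cost is
at least `s (c - 4L) + 2k s²` and the excess of `J₂` at least `(r - 2δ) k s`, where `s = r - x₁`.
For user 2, with `t = r - x₂`, the cost for `t ≥ δ` is at least `t (c + L + k t)`, while for
`t ≤ δ` its excess is `(δ - t)(k r - c - 2kδ - 2kt)`, nonnegative as `c ≤ k r - 4L`.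
-/

section Latency

variable {r L δ : ℝ}

lemma T_nonneg (x : ℝ) : 0 ≤ T r L δ x := le_max_left _ _

lemma le_T (x : ℝ) : L / δ * (x - r) + L ≤ T r L δ x := le_max_right _ _

lemma two_mul_sub_le_T (hδ : 0 < δ) (x : ℝ) : 2 * L - L / δ * (r - x) ≤ T r L δ (x + δ) := by
  linear_combination le_T (r := r) (L := L) (δ := δ) (x + δ) - div_mul_cancel₀ L hδ.ne'

lemma T_add_of_nonneg (hδ : 0 < δ) (hL : 0 ≤ L) {t : ℝ} (ht : 0 ≤ t) :
    T r L δ (r + t) = L / δ * t + L := by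
  rw [T, add_sub_cancel_left, max_eq_right (by positivity)]

lemma T_sub_add_of_nonneg (hδ : 0 < δ) (hL : 0 ≤ L) {s : ℝ} (hs : 0 ≤ s) :
    T r L δ (r - δ + s) = L / δ * s := by
  have h : L / δ * (r - δ + s - r) + L = L / δ * s := by field_simp; ring
  rw [T, h, max_eq_right (by positivity)]

lemma T_add_self (hδ : 0 < δ) (hL : 0 ≤ L) : T r L δ (r + δ) = 2 * L := by
  rw [T_add_of_nonneg hδ hL hδ.le, div_mul_cancel₀ L hδ.ne']; ring

lemma T_sub_self (hδ : 0 < δ) (hL : 0 ≤ L) : T r L δ (r - δ) = 0 := by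
  simpa using T_sub_add_of_nonneg (r := r) hδ hL le_rfl

end Latency

section Equilibrium

variable {r L δ c : ℝ}

lemma social_cost_le_of_full_local_route (hδ : 0 < δ) (hL : 0 ≤ L) (hc : 4 * L ≤ c)
    {x₁ : ℝ} (hx₁ : x₁ ∈ Set.Icc 0 r) :
    J₁ r L δ c r (r - δ) + J₂ r L δ c r (r - δ) ≤
      J₁ r L δ c x₁ (r - δ) + J₂ r L δ c x₁ (r - δ) := by
  obtain ⟨hx₀, hxr⟩ := hx₁
  set k := L / δ
  have hk : 0 ≤ k := by positivity
  have hkδ : k * δ = L := div_mul_cancel₀ L hδ.ne'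
  simp only [J₁, J₂, sub_sub_cancel, sub_self, add_zero]
  rw [T_add_self hδ hL, T_sub_self hδ hL, T_sub_add_of_nonneg hδ hL (sub_nonneg.2 hxr)]
  nlinarith [mul_le_mul_of_nonneg_left (two_mul_sub_le_T (r := r) (L := L) hδ x₁)
      (by linarith : 0 ≤ x₁ + δ),
    mul_nonneg (sub_nonneg.2 hxr) (by linarith : 0 ≤ c - 4 * L),
    mul_nonneg hk (sq_nonneg (r - x₁))]

lemma J₂_le_of_full_local_route (hδ : 0 < δ) (hL : 0 ≤ L) (hr : 2 * δ ≤ r)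
    {x₁ : ℝ} (hx₁ : x₁ ≤ r) :
    J₂ r L δ c r (r - δ) ≤ J₂ r L δ c x₁ (r - δ) := by
  simp only [J₂, sub_sub_cancel, sub_self, add_zero]
  rw [T_add_self hδ hL, T_sub_self hδ hL, T_sub_add_of_nonneg hδ hL (sub_nonneg.2 hx₁)]
  nlinarith [mul_le_mul_of_nonneg_left (two_mul_sub_le_T (r := r) (L := L) hδ x₁) hδ.le,
    mul_nonneg (mul_nonneg (by linarith : 0 ≤ r - 2 * δ) (by positivity : 0 ≤ L / δ))
      (sub_nonneg.2 hx₁)]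

lemma Jhat₁_le_of_le {β x₁ x₂ x₁' x₂' : ℝ} (hβ : β ∈ Set.Icc (1 / 2 : ℝ) 1)
    (h_social : J₁ r L δ c x₁ x₂ + J₂ r L δ c x₁ x₂ ≤ J₁ r L δ c x₁' x₂' + J₂ r L δ c x₁' x₂')
    (h_other : J₂ r L δ c x₁ x₂ ≤ J₂ r L δ c x₁' x₂') :
    Jhat₁ r L δ c β x₁ x₂ ≤ Jhat₁ r L δ c β x₁' x₂' := by
  have h_split : Jhat₁ r L δ c β x₁ x₂ =
      (1 - β) * (J₁ r L δ c x₁ x₂ + J₂ r L δ c x₁ x₂) + (2 * β - 1) * J₂ r L δ c x₁ x₂ := by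
    rw [Jhat₁]; ring
  have h_split' : Jhat₁ r L δ c β x₁' x₂' =
      (1 - β) * (J₁ r L δ c x₁' x₂' + J₂ r L δ c x₁' x₂') +
        (2 * β - 1) * J₂ r L δ c x₁' x₂' := by
    rw [Jhat₁]; ring
  rw [h_split, h_split']
  gcongr <;> linarith [hβ.1, hβ.2]

lemma J₂_le_of_cross_route (hδ : 0 < δ) (hL : 0 ≤ L) (hcL : 0 ≤ c + L)
    (hc : c ≤ (r - 4 * δ) * L / δ) {x₂ : ℝ} (hx₂ : x₂ ∈ Set.Icc 0 r) :
    J₂ r L δ c r (r - δ) ≤ J₂ r L δ c r x₂ := by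
  obtain ⟨hx₀, hxr⟩ := hx₂
  set k := L / δ
  have hk : 0 ≤ k := by positivity
  have hkδ : k * δ = L := div_mul_cancel₀ L hδ.ne'
  simp only [J₂, sub_sub_cancel, sub_self, add_zero]
  rw [T_sub_self hδ hL, T_add_self hδ hL, T_add_of_nonneg hδ hL (sub_nonneg.2 hxr)]
  rcases le_total δ (r - x₂) with h_far | h_near
  · nlinarith [mul_nonneg hx₀ (T_nonneg (r := r) (L := L) (δ := δ) x₂),
      mul_le_mul_of_nonneg_right h_far hcL, mul_le_mul h_far h_far hδ.le (by linarith)]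
  · have h_lower : L - k * (r - x₂) ≤ T r L δ x₂ := by
      linear_combination le_T (r := r) (L := L) (δ := δ) x₂
    have h_slope : c + 4 * L ≤ k * r := by
      have : (r - 4 * δ) * L / δ = k * r - 4 * k * δ := by ring
      linarith
    have h_factor : 0 ≤ k * r - c - 2 * k * δ - 2 * k * (r - x₂) := by
      nlinarith [mul_le_mul_of_nonneg_left h_near hk]
    nlinarith [mul_le_mul_of_nonneg_left h_lower hx₀, mul_nonneg (sub_nonneg.2 h_near) h_factor]

end Equilibrium

theorem altruistic_profile_is_nash_equilibrium_general
    (r L δ c : ℝ) (hδ : 0 < δ) (hδL : δ < L)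
    (hr : 4 * δ < r) (hc₁ : 4 * L ≤ c) (hc₂ : c < (r - 4 * δ) * L / δ)
    (β : ℝ) (hβ : β ∈ Set.Ioc (1 / 2 : ℝ) 1) :
    (∀ x₁ ∈ Set.Icc (0 : ℝ) r,
      Jhat₁ r L δ c β r (r - δ) ≤ Jhat₁ r L δ c β x₁ (r - δ)) ∧
    (∀ x₂ ∈ Set.Icc (0 : ℝ) r, J₂ r L δ c r (r - δ) ≤ J₂ r L δ c r x₂) := by
  have hL : 0 ≤ L := by linarith
  refine ⟨fun x₁ hx₁ => ?_, fun x₂ hx₂ => J₂_le_of_cross_route hδ hL (by linarith) hc₂.le hx₂⟩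
  exact Jhat₁_le_of_le (Set.Ioc_subset_Icc_self hβ)
    (social_cost_le_of_full_local_route hδ hL hc₁ hx₁)
    (J₂_le_of_full_local_route hδ hL (by linarith) hx₁.2)

theorem altruistic_profile_is_nash_equilibrium
    (r L δ c : ℝ) (hδ : 0 < δ) (hδL : δ < L) (hLc : L < c) (hcδ : c * δ < r * L)
    (hr : 4 * δ < r) (hc₁ : 4 * L ≤ c) (hc₂ : c < (r - 4 * δ) * L / δ)
    (β : ℝ) (hβ : β ∈ Set.Ioc (1 / 2 : ℝ) 1) :
    (∀ x₁ ∈ Set.Icc (0 : ℝ) r,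
      Jhat₁ r L δ c β r (r - δ) ≤ Jhat₁ r L δ c β x₁ (r - δ)) ∧
    (∀ x₂ ∈ Set.Icc (0 : ℝ) r, J₂ r L δ c r (r - δ) ≤ J₂ r L δ c r x₂) :=
  altruistic_profile_is_nash_equilibrium_general r L δ c hδ hδL hr hc₁ hc₂ β hβ
end

section
/- In the n-user routing game on the load-balancing network with uniform cross-link splitting, the all-local profile (p₁, …, p_n) = (r, …, r) is the unique minimizer of the total cost Σᵢ Jᵢ over [0, r]ⁿ, and the minimum total cost equals n·r·L. -/
open Finset

/-- Total flow on local link `j` under profile `p` (uniform cross-link splitting). -/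
noncomputable def flow (n : ℕ) (r : ℝ) (p : Fin n → ℝ) (j : Fin n) : ℝ :=
  p j + ∑ i ∈ Finset.univ.erase j, (r - p i) / ((n : ℝ) - 1)

/-- Cost of user `i` in the `n`-user load-balancing game with uniform cross-link splitting. -/
noncomputable def J (n : ℕ) (r L δ c : ℝ) (p : Fin n → ℝ) (i : Fin n) : ℝ :=
  p i * T r L δ (flow n r p i) +
    ∑ j ∈ Finset.univ.erase i, (r - p i) / ((n : ℝ) - 1) * (c + T r L δ (flow n r p j))

lemma sum_flow_eq (n : ℕ) (hn : 2 ≤ n) (r : ℝ) (p : Fin n → ℝ) :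
    ∑ j, flow n r p j = n * r := by
  have hn1 : ((n : ℝ) - 1) ≠ 0 := by
    have : (2 : ℝ) ≤ n := by exact_mod_cast hn
    linarith
  have hA : ((n : ℝ) - 1) * (∑ i, (r - p i) / ((n : ℝ) - 1)) = ∑ i, (r - p i) := by
    rw [Finset.mul_sum]
    exact Finset.sum_congr rfl fun i _ => mul_div_cancel₀ _ hn1
  have hsum : ∑ i, (r - p i) = n * r - ∑ i, p i := by
    rw [Finset.sum_sub_distrib, Finset.sum_const, Finset.card_univ, Fintype.card_fin,
      nsmul_eq_mul]
  unfold flow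
  rw [Finset.sum_add_distrib]
  simp only [Finset.sum_erase_eq_sub (Finset.mem_univ _)]
  rw [Finset.sum_sub_distrib, Finset.sum_const, Finset.card_univ, Fintype.card_fin,
    nsmul_eq_mul]
  linear_combination hA + hsum

lemma sum_J_eq (n : ℕ) (hn : 2 ≤ n) (r L δ c : ℝ) (p : Fin n → ℝ) :
    ∑ i, J n r L δ c p i =
      (∑ j, flow n r p j * T r L δ (flow n r p j)) + c * (n * r - ∑ i, p i) := by
  set f : Fin n → ℝ := flow n r p with hf
  set h : Fin n → Fin n → ℝ :=
    fun i j => (r - p i) / ((n : ℝ) - 1) * (c + T r L δ (f j)) with hh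
  have hswap : ∑ i, ∑ j ∈ Finset.univ.erase i, h i j
      = ∑ j, ∑ i ∈ Finset.univ.erase j, h i j := by
    simp only [Finset.sum_erase_eq_sub (Finset.mem_univ _)]
    rw [Finset.sum_sub_distrib, Finset.sum_sub_distrib, Finset.sum_comm]
  have hinner : ∀ j, ∑ i ∈ Finset.univ.erase j, h i j
      = (c + T r L δ (f j)) * (f j - p j) := by
    intro j
    rw [hh]
    simp only []
    rw [← Finset.sum_mul]
    have hs : (∑ i ∈ Finset.univ.erase j, (r - p i) / ((n : ℝ) - 1)) = f j - p j := by
      rw [hf]; unfold flow; ring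
    rw [hs, mul_comm]
  have hJ : ∀ i, J n r L δ c p i = p i * T r L δ (f i) + ∑ j ∈ Finset.univ.erase i, h i j := by
    intro i; rfl
  calc ∑ i, J n r L δ c p i
      = ∑ i, (p i * T r L δ (f i)) + ∑ i, ∑ j ∈ Finset.univ.erase i, h i j := by
        rw [← Finset.sum_add_distrib]
        exact Finset.sum_congr rfl fun i _ => hJ i
    _ = ∑ i, (p i * T r L δ (f i)) + ∑ j, (c + T r L δ (f j)) * (f j - p j) := by
        rw [hswap]
        congr 1
        exact Finset.sum_congr rfl fun j _ => hinner j
    _ = ∑ j, (f j * T r L δ (f j) + c * (f j - p j)) := by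
        rw [← Finset.sum_add_distrib]
        exact Finset.sum_congr rfl fun j _ => by ring
    _ = (∑ j, f j * T r L δ (f j)) + c * (∑ j, f j - ∑ j, p j) := by
        rw [Finset.sum_add_distrib]
        congr 1
        rw [← Finset.mul_sum, Finset.sum_sub_distrib]
    _ = (∑ j, f j * T r L δ (f j)) + c * (n * r - ∑ i, p i) := by
        rw [sum_flow_eq n hn r p]

lemma key_lower (n : ℕ) (hn : 2 ≤ n) (r L δ c : ℝ)
    (hδ : 0 < δ) (hδL : δ < L)
    (p : Fin n → ℝ) (hp : ∀ i, p i ∈ Set.Icc (0 : ℝ) r) :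
    (n : ℝ) * r * L + c * ((n : ℝ) * r - ∑ i, p i) ≤ ∑ i, J n r L δ c p i := by
  have hn1 : (0 : ℝ) < (n : ℝ) - 1 := by
    have : (2 : ℝ) ≤ n := by exact_mod_cast hn
    linarith
  have hL : 0 < L := lt_trans hδ hδL
  have hf0 : ∀ j, 0 ≤ flow n r p j := by
    intro j
    unfold flow
    have h1 : 0 ≤ p j := (hp j).1
    have h2 : 0 ≤ ∑ i ∈ Finset.univ.erase j, (r - p i) / ((n : ℝ) - 1) := by
      apply Finset.sum_nonneg
      intro i _
      exact div_nonneg (by linarith [(hp i).2]) (le_of_lt hn1)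
    linarith
  rw [sum_J_eq n hn r L δ c p]
  have hmain : (n : ℝ) * r * L ≤ ∑ j, flow n r p j * T r L δ (flow n r p j) := by
    have step1 : ∑ j, flow n r p j * (L / δ * (flow n r p j - r) + L)
        ≤ ∑ j, flow n r p j * T r L δ (flow n r p j) := by
      apply Finset.sum_le_sum
      intro j _
      exact mul_le_mul_of_nonneg_left (le_max_right _ _) (hf0 j)
    have step2 : ∑ j, flow n r p j * (L / δ * (flow n r p j - r) + L)
        = L * ((n : ℝ) * r) + L / δ * ∑ j, (flow n r p j - r) ^ 2
          + (L / δ * r) * (∑ j, (flow n r p j - r)) := by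
      rw [← sum_flow_eq n hn r p, Finset.mul_sum, Finset.mul_sum, Finset.mul_sum,
        ← Finset.sum_add_distrib, ← Finset.sum_add_distrib]
      exact Finset.sum_congr rfl fun j _ => by ring
    have hd : ∑ j, (flow n r p j - r) = 0 := by
      rw [Finset.sum_sub_distrib, sum_flow_eq n hn r p, Finset.sum_const,
        Finset.card_univ, Fintype.card_fin, nsmul_eq_mul]
      ring
    have hsq : 0 ≤ ∑ j, (flow n r p j - r) ^ 2 :=
      Finset.sum_nonneg fun j _ => sq_nonneg _
    have hLδ : 0 ≤ L / δ := le_of_lt (div_pos hL hδ)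
    rw [hd, mul_zero, add_zero] at step2
    have hnn := mul_nonneg hLδ hsq
    linarith
  linarith

theorem n_user_social_optimum_all_local
    (n : ℕ) (hn : 2 ≤ n) (r L δ c : ℝ)
    (hδ : 0 < δ) (hδL : δ < L) (hLc : L < c) (hcδ : c * δ < r * L) :
    (∑ i, J n r L δ c (fun _ => r) i) = n * r * L ∧
    (∀ p : Fin n → ℝ, (∀ i, p i ∈ Set.Icc (0 : ℝ) r) →
      (n : ℝ) * r * L ≤ ∑ i, J n r L δ c p i) ∧
    (∀ p : Fin n → ℝ, (∀ i, p i ∈ Set.Icc (0 : ℝ) r) →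
      (∑ i, J n r L δ c p i) = n * r * L → p = fun _ => r) := by
  have hL : 0 < L := lt_trans hδ hδL
  have hc : 0 < c := lt_trans hL hLc
  have hflowr : ∀ j, flow n r (fun _ => r) j = r := by
    intro j; unfold flow; simp
  have hTr : T r L δ r = L := by
    unfold T
    rw [sub_self, mul_zero, zero_add]
    exact max_eq_right (le_of_lt hL)
  have hval : ∑ i, J n r L δ c (fun _ => r) i = n * r * L := by
    have : ∀ i : Fin n, J n r L δ c (fun _ => r) i = r * L := by
      intro i
      unfold J
      simp only [hflowr, hTr, sub_self, zero_div, zero_mul, Finset.sum_const_zero, add_zero]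
    rw [Finset.sum_congr rfl fun i _ => this i, Finset.sum_const, Finset.card_univ,
      Fintype.card_fin, nsmul_eq_mul]
    ring
  have hsump : ∀ p : Fin n → ℝ, (∀ i, p i ∈ Set.Icc (0 : ℝ) r) →
      ∑ i, p i ≤ (n : ℝ) * r := by
    intro p hp
    calc ∑ i, p i ≤ ∑ _i : Fin n, r := Finset.sum_le_sum fun i _ => (hp i).2
      _ = (n : ℝ) * r := by
          rw [Finset.sum_const, Finset.card_univ, Fintype.card_fin, nsmul_eq_mul]
  refine ⟨hval, ?_, ?_⟩
  · intro p hp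
    have h1 := key_lower n hn r L δ c hδ hδL p hp
    have h2 := hsump p hp
    nlinarith
  · intro p hp heq
    have h1 := key_lower n hn r L δ c hδ hδL p hp
    have h2 := hsump p hp
    have h3 : (n : ℝ) * r - ∑ i, p i = 0 := by nlinarith
    have h4 : ∑ i, (r - p i) = 0 := by
      rw [Finset.sum_sub_distrib, Finset.sum_const, Finset.card_univ, Fintype.card_fin,
        nsmul_eq_mul]
      linarith
    have h5 := (Finset.sum_eq_zero_iff_of_nonneg
      (fun i _ => by linarith [(hp i).2] : ∀ i ∈ Finset.univ, (0:ℝ) ≤ r - p i)).mp h4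
    funext i
    have := h5 i (Finset.mem_univ i)
    linarith
end
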